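/- arXiv:2402.16808 — 2 statements merged into one kernel-verified Lean document; each statement's English description precedes it below -/
import Mathlib

section
/- Let F be an infinite field of characteristic not 2, K/F a quadratic étale algebra, E an étale F-algebra of degree n, K_E = K ⊗_F E, λ ∈ E×, V a nondegenerate hermitian K-space, and r₁, r₂ : V_{E,λ} → V isomorphisms of hermitian spaces. Define i′_j : K_E → End_K(V) by i′_j(x) = r_j ∘ M_x ∘ r_j⁻¹. If g ∈ GL_K(V) satisfies i′₁(x) = g ∘ i′₂(x) ∘ g⁻¹ for all x in the norm-one group K_E¹, then i′₁(x) = g ∘ i′₂(x) ∘ g⁻¹ for all x ∈ K_E. -/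
open scoped TensorProduct

/-- The norm map `x ↦ x · conj x` on units of an algebra with involution. -/
def normMap {F A : Type} [Field F] [CommRing A] [Algebra F A]
    (σ : A →ₐ[F] A) : Aˣ →* Aˣ :=
  (MonoidHom.id Aˣ) * (Units.map σ.toRingHom.toMonoidHom)

/-- The norm-one group `A¹ = {x ∈ A× : x · σ x = 1}`. -/
def normOneGroup {F A : Type} [Field F] [CommRing A] [Algebra F A]
    (σ : A →ₐ[F] A) : Subgroup Aˣ :=
  (normMap σ).ker

/-- The involution `σ = conj ⊗ id` on `K_E = K ⊗[F] E`. -/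
noncomputable def tensorConj {F K E : Type} [Field F] [CommRing K] [Algebra F K]
    [CommRing E] [Algebra F E] (conj : K →ₐ[F] K) :
    (K ⊗[F] E) →ₐ[F] (K ⊗[F] E) :=
  Algebra.TensorProduct.map conj (AlgHom.id F E)

/-- The hermitian form `⟨x,y⟩_μ = Tr_{K_E/K}(μ · x · σ(y))` on `K_E`. -/
noncomputable def hermFormOf {F K E : Type} [Field F] [CommRing K] [Algebra F K]
    [CommRing E] [Algebra F E] (conj : K →ₐ[F] K) (μ x y : K ⊗[F] E) : K :=
  Algebra.trace K (K ⊗[F] E) (μ * x * (tensorConj conj y))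

/-! The two maps `x ↦ r₁ M_x r₁⁻¹` and `x ↦ g r₂ M_x r₂⁻¹ g⁻¹` are `K`-algebra homomorphisms
`K_E → End_K(V)`, so their equalizer is a subalgebra closed under inverses of units. If `σ z = -z`
and `s ∈ F` avoids the finitely many points where `s ± z` is not invertible, the Cayley transform
`(s + z)(s - z)⁻¹` has norm one, and `1 + (s + z)(s - z)⁻¹ = 2s (s - z)⁻¹`; hence `z` lies in the
equalizer. For a skew unit `δ ∈ K`, the skew elements `δ ⊗ e` span `K_E` over `K`. -/

open Polynomial in
theorem spectrum.finite_of_isIntegral {𝕜 A : Type*} [Field 𝕜] [Ring A] [Algebra 𝕜 A] {a : A}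
    (ha : IsIntegral 𝕜 a) : (spectrum 𝕜 a).Finite := by
  refine (finite_setOfPred_isRoot (minpoly.ne_zero ha)).subset fun k hk => ?_
  have hk0 := spectrum.subset_polynomial_aeval a (minpoly 𝕜 a) ⟨k, hk, rfl⟩
  rw [minpoly.aeval] at hk0
  rcases subsingleton_or_nontrivial A with _ | _
  · simp [spectrum.of_subsingleton] at hk0
  · simpa [spectrum.zero_eq] using hk0

theorem AlgHom.inv_mem_equalizer {R A B : Type*} [CommSemiring R] [Semiring A] [Semiring B]
    [Algebra R A] [Algebra R B] {φ ψ : A →ₐ[R] B} {u : Aˣ} (hu : (u : A) ∈ φ.equalizer ψ) :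
    ((u⁻¹ : Aˣ) : A) ∈ φ.equalizer ψ := by
  have hmap : Units.map (φ : A →* B) u = Units.map (ψ : A →* B) u := Units.ext hu
  simpa [← map_inv] using congrArg (fun v => ((v⁻¹ : Bˣ) : B)) hmap

theorem isReduced_of_forall_trace_mul_ne_zero {F K : Type*} [Field F] [CommRing K] [Algebra F K]
    (h : ∀ x : K, x ≠ 0 → ∃ y, Algebra.trace F K (x * y) ≠ 0) : IsReduced K := by
  refine ⟨fun x hx => by_contra fun hx0 => ?_⟩
  obtain ⟨y, hy⟩ := h x hx0
  exact hy <| (Algebra.isNilpotent_trace_of_isNilpotent <|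
    (Commute.all x y).isNilpotent_mul_right hx).eq_zero

theorem exists_isUnit_conj_eq_neg {F K : Type*} [Field F] [CommRing K] [IsReduced K]
    [Algebra F K] (hK2 : Module.finrank F K = 2)
    (conj : K →ₐ[F] K) (hconj : ∀ x, conj (conj x) = x)
    (hfix : ∀ x : K, conj x = x ↔ ∃ a : F, algebraMap F K a = x) :
    ∃ δ : K, IsUnit δ ∧ conj δ = -δ := by
  have : Nontrivial K := Module.nontrivial_of_finrank_pos (R := F) (by omega)
  obtain ⟨x, hx⟩ : ∃ x : K, conj x ≠ x := by
    by_contra! h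
    have hbij : Function.Bijective (Algebra.linearMap F K) :=
      ⟨(algebraMap F K).injective, fun x => (hfix x).mp (h x)⟩
    have := (LinearEquiv.ofBijective _ hbij).finrank_eq
    rw [Module.finrank_self] at this
    omega
  set δ := x - conj x
  have hδ : conj δ = -δ := by simp only [δ, map_sub, hconj, neg_sub]
  obtain ⟨c, hc⟩ : ∃ c : F, algebraMap F K c = δ * δ :=
    (hfix _).mp (by rw [map_mul, hδ, neg_mul_neg])
  have hc0 : c ≠ 0 := by
    rintro rfl
    have hδ0 : δ = 0 := IsReduced.eq_zero δ ⟨2, by rw [sq, ← hc, map_zero]⟩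
    exact hx (sub_eq_zero.mp hδ0).symm
  have hδδ : IsUnit (δ * δ) := hc ▸ (Ne.isUnit hc0).map (algebraMap F K)
  exact ⟨δ, isUnit_of_mul_isUnit_left hδδ, hδ⟩

theorem exists_isUnit_sub_and_add {F A : Type*} [Field F] [Infinite F] [Ring A] [Algebra F A]
    {z : A} (hz : IsIntegral F z) :
    ∃ s : F, s ≠ 0 ∧ IsUnit (algebraMap F A s - z) ∧ IsUnit (algebraMap F A s + z) := by
  have hfin : (spectrum F z ∪ -spectrum F z ∪ {0}).Finite :=
    ((spectrum.finite_of_isIntegral hz).union (spectrum.finite_of_isIntegral hz).neg).union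
      (Set.finite_singleton 0)
  obtain ⟨s, hs⟩ := hfin.infinite_compl.nonempty
  simp only [Set.mem_compl_iff, Set.mem_union, Set.mem_neg, Set.mem_singleton_iff, not_or] at hs
  obtain ⟨⟨hsz, hsz'⟩, hs0⟩ := hs
  refine ⟨s, hs0, spectrum.notMem_iff.mp hsz, ?_⟩
  simpa [neg_sub_neg, add_comm] using (spectrum.notMem_iff.mp hsz').neg

theorem mem_of_conj_eq_neg {F A : Type} [Field F] [Infinite F] [CommRing A] [Algebra F A]
    (h2 : (2 : F) ≠ 0) (σ : A →ₐ[F] A) {S : Subalgebra F A}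
    (hnorm : ∀ u ∈ normOneGroup σ, (u : A) ∈ S)
    (hinv : ∀ u : Aˣ, (u : A) ∈ S → ((u⁻¹ : Aˣ) : A) ∈ S)
    {z : A} (hzint : IsIntegral F z) (hz : σ z = -z) : z ∈ S := by
  obtain ⟨s, hs0, ha, hb⟩ := exists_isUnit_sub_and_add hzint
  set a := ha.unit
  set b := hb.unit
  have hσa : Units.map σ.toRingHom.toMonoidHom a = b :=
    Units.ext (by simp [a, b, hz, sub_eq_add_neg])
  have hσb : Units.map σ.toRingHom.toMonoidHom b = a :=
    Units.ext (by simp [a, b, hz, sub_eq_add_neg])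
  have hw : b * a⁻¹ ∈ normOneGroup σ := by
    rw [normOneGroup, MonoidHom.mem_ker, normMap, MonoidHom.mul_apply, MonoidHom.id_apply,
      map_mul, map_inv, hσa, hσb]
    group
  have h2s : algebraMap F A (2 * s) * ↑a⁻¹ = 1 + ↑(b * a⁻¹) := by
    rw [Units.val_mul, ← a.mul_inv, ← add_mul]
    congr 1
    simp [a, b, two_mul]
  have hainv : ((a⁻¹ : Aˣ) : A) ∈ S := by
    have hmem : algebraMap F A (2 * s) * ↑a⁻¹ ∈ S := h2s ▸ S.add_mem S.one_mem (hnorm _ hw)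
    have := S.smul_mem hmem (2 * s)⁻¹
    rwa [Algebra.smul_def, ← mul_assoc, ← map_mul, inv_mul_cancel₀ (mul_ne_zero h2 hs0),
      map_one, one_mul] at this
  have ha' : (a : A) ∈ S := by simpa using hinv a⁻¹ hainv
  have hz' : z = algebraMap F A s - a := by simp [a]
  exact hz' ▸ S.sub_mem (S.algebraMap_mem s) ha'

theorem TensorProduct.mem_of_forall_tmul_mem {F K E : Type*} [CommSemiring F] [CommSemiring K]
    [Algebra F K] [AddCommMonoid E] [Module F E] (M : Submodule K (K ⊗[F] E)) {δ : K}
    (hδ : IsUnit δ) (h : ∀ e, δ ⊗ₜ e ∈ M) (x : K ⊗[F] E) : x ∈ M := by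
  induction x using TensorProduct.induction_on with
  | zero => exact M.zero_mem
  | tmul k e =>
    have : k ⊗ₜ[F] e = (k * ↑hδ.unit⁻¹) • (δ ⊗ₜ[F] e) := by
      rw [TensorProduct.smul_tmul', smul_eq_mul, mul_assoc, hδ.val_inv_mul, mul_one]
    exact this ▸ M.smul_mem _ (h e)
  | add x y hx hy => exact M.add_mem hx hy

theorem TensorProduct.algHom_eq_of_eqOn_normOneGroup {F K E : Type} {B : Type*} [Field F]
    [Infinite F] [CommRing K] [Algebra F K] [Module.Finite F K] [CommRing E] [Algebra F E]
    [Module.Finite F E]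
    [Ring B] [Algebra K B] (h2 : (2 : F) ≠ 0) (conj : K →ₐ[F] K) {δ : K} (hδ : IsUnit δ)
    (hδconj : conj δ = -δ) (φ ψ : K ⊗[F] E →ₐ[K] B)
    (h : ∀ u ∈ normOneGroup (tensorConj (E := E) conj), φ u = ψ u) : φ = ψ := by
  have hskew (e : E) : δ ⊗ₜ[F] e ∈ φ.equalizer ψ :=
    mem_of_conj_eq_neg (S := (φ.equalizer ψ).restrictScalars F) h2 (tensorConj conj) h
      (fun _ => AlgHom.inv_mem_equalizer) (Algebra.IsIntegral.isIntegral _)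
      (by simp [tensorConj, hδconj, TensorProduct.neg_tmul])
  exact AlgHom.ext fun x =>
    TensorProduct.mem_of_forall_tmul_mem (φ.equalizer ψ).toSubmodule hδ hskew x

theorem stmt13_general (F K E V : Type) [Field F] [Infinite F] [CommRing K] [Algebra F K]
    [CommRing E] [Algebra F E] [AddCommGroup V] [Module K V]
    (hchar : (2 : F) ≠ 0)
    (hK2 : Module.finrank F K = 2)
    (hKet : ∀ x : K, x ≠ 0 → ∃ y : K, Algebra.trace F K (x * y) ≠ 0)
    (conj : K →ₐ[F] K)
    (hconj : ∀ x, conj (conj x) = x)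
    (hfix : ∀ x : K, conj x = x ↔ ∃ a : F, algebraMap F K a = x)
    [Module.Finite F E]
    (r₁ r₂ : (K ⊗[F] E) ≃ₗ[K] V)
    (g : V ≃ₗ[K] V)
    (hyp : ∀ x : (K ⊗[F] E)ˣ, x ∈ normOneGroup (tensorConj conj) →
      r₁.toLinearMap ∘ₗ (Algebra.lmul K (K ⊗[F] E) (x : K ⊗[F] E)) ∘ₗ r₁.symm.toLinearMap
        = g.toLinearMap
            ∘ₗ (r₂.toLinearMap ∘ₗ (Algebra.lmul K (K ⊗[F] E) (x : K ⊗[F] E))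
                  ∘ₗ r₂.symm.toLinearMap)
            ∘ₗ g.symm.toLinearMap) :
    ∀ x : K ⊗[F] E,
      r₁.toLinearMap ∘ₗ (Algebra.lmul K (K ⊗[F] E) x) ∘ₗ r₁.symm.toLinearMap
        = g.toLinearMap
            ∘ₗ (r₂.toLinearMap ∘ₗ (Algebra.lmul K (K ⊗[F] E) x) ∘ₗ r₂.symm.toLinearMap)
            ∘ₗ g.symm.toLinearMap := by
  have : Module.Finite F K := Module.finite_of_finrank_pos (by omega)
  have : IsReduced K := isReduced_of_forall_trace_mul_ne_zero hKet
  obtain ⟨δ, hδ, hδconj⟩ := exists_isUnit_conj_eq_neg hK2 conj hconj hfix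
  let i₁ := (r₁.conjAlgEquiv K).toAlgHom.comp (Algebra.lmul K (K ⊗[F] E))
  let i₂ := (g.conjAlgEquiv K).toAlgHom.comp <|
    (r₂.conjAlgEquiv K).toAlgHom.comp (Algebra.lmul K (K ⊗[F] E))
  exact AlgHom.congr_fun <|
    TensorProduct.algHom_eq_of_eqOn_normOneGroup hchar conj hδ hδconj i₁ i₂ hyp

/-- If `r₁, r₂ : V_{E,λ} → V` are isomorphisms of hermitian
spaces, `i′_j(x) = r_j ∘ M_x ∘ r_j⁻¹`, and `g ∈ GL_K(V)` conjugates `i′₂` to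
`i′₁` on the norm-one group `K_E¹`, then it does so on all of `K_E`. -/
theorem stmt13 (F K E V : Type) [Field F] [Infinite F] [CommRing K] [Algebra F K]
    [CommRing E] [Algebra F E] [AddCommGroup V] [Module K V] (n : ℕ)
    (hchar : (2 : F) ≠ 0)
    (hK2 : Module.finrank F K = 2)
    (hKet : ∀ x : K, x ≠ 0 → ∃ y : K, Algebra.trace F K (x * y) ≠ 0)
    (conj : K →ₐ[F] K)
    (hconj : ∀ x, conj (conj x) = x)
    (hfix : ∀ x : K, conj x = x ↔ ∃ a : F, algebraMap F K a = x)
    [Module.Finite F E] (hEn : Module.finrank F E = n)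
    (hEet : ∀ x : E, x ≠ 0 → ∃ y : E, Algebra.trace F E (x * y) ≠ 0)
    (B : V → V → K)
    (hherm : ∀ x y, B x y = conj (B y x))
    (haddl : ∀ x x' y, B (x + x') y = B x y + B x' y)
    (hsmull : ∀ (a : K) (x y : V), B (a • x) y = a * B x y)
    (hnd : ∀ x : V, x ≠ 0 → ∃ y, B x y ≠ 0)
    (lam : Eˣ)
    (r₁ r₂ : (K ⊗[F] E) ≃ₗ[K] V)
    (hr₁ : ∀ x y : K ⊗[F] E,
      B (r₁ x) (r₁ y) = hermFormOf conj (Algebra.TensorProduct.includeRight (lam : E)) x y)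
    (hr₂ : ∀ x y : K ⊗[F] E,
      B (r₂ x) (r₂ y) = hermFormOf conj (Algebra.TensorProduct.includeRight (lam : E)) x y)
    (g : V ≃ₗ[K] V)
    (hyp : ∀ x : (K ⊗[F] E)ˣ, x ∈ normOneGroup (tensorConj conj) →
      r₁.toLinearMap ∘ₗ (Algebra.lmul K (K ⊗[F] E) (x : K ⊗[F] E)) ∘ₗ r₁.symm.toLinearMap
        = g.toLinearMap
            ∘ₗ (r₂.toLinearMap ∘ₗ (Algebra.lmul K (K ⊗[F] E) (x : K ⊗[F] E))
                  ∘ₗ r₂.symm.toLinearMap)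
            ∘ₗ g.symm.toLinearMap) :
    ∀ x : K ⊗[F] E,
      r₁.toLinearMap ∘ₗ (Algebra.lmul K (K ⊗[F] E) x) ∘ₗ r₁.symm.toLinearMap
        = g.toLinearMap
            ∘ₗ (r₂.toLinearMap ∘ₗ (Algebra.lmul K (K ⊗[F] E) x) ∘ₗ r₂.symm.toLinearMap)
            ∘ₗ g.symm.toLinearMap :=
  stmt13_general F K E V hchar hK2 hKet conj hconj hfix r₁ r₂ g hyp
end

section
/- (Uniqueness of conjugating data.) Let r₁ : V_{E,λ} → V and r₂ : V_{E,λ'} → V be isomorphisms of hermitian spaces over K, with λ, λ' ∈ E×. The equality r₁ ∘ M_x ∘ r₁⁻¹ = r₂ ∘ M_x ∘ r₂⁻¹ holds for all x ∈ K_E¹ if and only if there exists y ∈ K_E× with λ = N_{K_E/E}(y)·λ' and r₁ = r₂ ∘ M_y. -/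
open scoped TensorProduct

/-!
Put `T = r₂⁻¹ ∘ r₁`, a `K`-linear automorphism of `K_E`; the hypothesis says that `T` commutes
with multiplication by every element of `K_E¹`. If `σ w = -w` and `t ∈ F×` lies outside the
(finite) spectrum of `w`, the Cayley transform `x = (t + w) / (t - w)` lies in `K_E¹` and
`w = t - 2t (1 + x)⁻¹`. Since a subalgebra of a finite-dimensional algebra is closed under
inverses of units, every such `w` lies in the `F`-algebra generated by `K_E¹`. As `K` contains
an invertible `δ` with `conj δ = -δ`, the elements `δ ⊗ e` span `K_E` over `K`; hence `T`
commutes with every multiplication, i.e. `T = M_y` with `y = T 1`. Then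
`⟨x, x'⟩_λ = ⟨y x, y x'⟩_λ' = ⟨x, x'⟩_{y σ(y) λ'}`, and the nondegeneracy of the trace form of
`K_E / K`, inherited from that of `E / F`, gives `λ = y σ(y) λ'`.
-/

theorem Subalgebra.val_inv_mem_of_finite {F A : Type*} [Field F] [Ring A] [Algebra F A]
    [Module.Finite F A] (C : Subalgebra F A) {u : Aˣ} (hu : (u : A) ∈ C) :
    ((u⁻¹ : Aˣ) : A) ∈ C := by
  have hreg : (⟨u, hu⟩ : C) ∈ nonZeroDivisors C :=
    mem_nonZeroDivisors_of_injective (f := C.val) Subtype.val_injective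
      u.isUnit.mem_nonZeroDivisors
  obtain ⟨v, hv⟩ :=
    (IsArtinianRing.isUnit_of_nonZeroDivisor_of_isIntegral' (R := F) hreg).exists_right_inv
  rw [Units.inv_eq_of_mul_eq_one_right (congrArg Subtype.val hv)]
  exact v.2

theorem finite_spectrum_of_finite (F : Type*) {A : Type*} [Field F] [Ring A] [Algebra F A]
    [Module.Finite F A] (a : A) : (spectrum F a).Finite := by
  refine (Module.End.finite_spectrum (Algebra.lmul F A a)).subset fun r hr ↦ ?_
  rw [spectrum.mem_iff, ← Algebra.lmul_isUnit_iff (R := F), map_sub, AlgHom.commutes] at hr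
  exact hr

theorem exists_ne_zero_notMem_spectrum (F : Type*) {A : Type*} [Field F] [Infinite F] [Ring A]
    [Algebra F A] [Module.Finite F A] (a : A) : ∃ t : F, t ≠ 0 ∧ t ∉ spectrum F a := by
  obtain ⟨t, ht⟩ := ((finite_spectrum_of_finite F a).insert 0).infinite_compl.nonempty
  simp only [Set.mem_compl_iff, Set.mem_insert_iff, not_or] at ht
  exact ⟨t, ht⟩

section NormOne

variable {F A : Type} [Field F] [CommRing A] [Algebra F A] (σ : A →ₐ[F] A)

theorem map_mul_inv_mem_normOneGroup {u : Aˣ} (hu : σ (σ u) = u) :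
    Units.map σ.toRingHom.toMonoidHom u * u⁻¹ ∈ normOneGroup σ := by
  have : normMap σ (Units.map σ.toRingHom.toMonoidHom u) = normMap σ u := by
    ext; simp [normMap, hu, mul_comm]
  rw [normOneGroup, MonoidHom.mem_ker, map_mul, map_inv, this, mul_inv_cancel]

theorem mem_adjoin_normOneGroup_of_map_eq_neg [Infinite F] [Module.Finite F A]
    (h2 : (2 : F) ≠ 0) {w : A} (hw : σ w = -w) :
    w ∈ Algebra.adjoin F (((↑) : Aˣ → A) '' normOneGroup σ) := by
  set C := Algebra.adjoin F (((↑) : Aˣ → A) '' normOneGroup σ)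
  obtain ⟨t, ht0, ht⟩ := exists_ne_zero_notMem_spectrum F w
  set u := (spectrum.notMem_iff.mp ht).unit
  have hu : (u : A) = algebraMap F A t - w := rfl
  have hσu : σ u = algebraMap F A t + w := by
    rw [hu, map_sub, AlgHom.commutes, hw, sub_neg_eq_add]
  have hσσu : σ (σ u) = u := by rw [hσu, map_add, AlgHom.commutes, hw, hu, sub_eq_add_neg]
  set x := Units.map σ.toRingHom.toMonoidHom u * u⁻¹
  have hx : (x : A) ∈ C :=
    Algebra.subset_adjoin ⟨x, map_mul_inv_mem_normOneGroup σ hσσu, rfl⟩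
  have h1x : (1 + x : A) * u = algebraMap F A (2 * t) := by
    simp only [x, Units.val_mul, Units.coe_map, add_mul, one_mul, mul_assoc, Units.inv_mul,
      mul_one]
    change (u : A) + σ u = _
    rw [hσu, hu, map_mul, map_ofNat]
    ring
  obtain ⟨v, hv⟩ : IsUnit (1 + x : A) :=
    isUnit_of_mul_isUnit_left (h1x ▸ (IsUnit.mk0 _ (mul_ne_zero h2 ht0)).map (algebraMap F A))
  have hu' : (u : A) = (2 * t) • ((v⁻¹ : Aˣ) : A) := by
    rw [Algebra.smul_def, ← h1x, ← hv, mul_comm (v : A), mul_assoc, Units.mul_inv, mul_one]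
  have hvC : ((v⁻¹ : Aˣ) : A) ∈ C := C.val_inv_mem_of_finite (hv ▸ C.add_mem C.one_mem hx)
  have hw' : w = algebraMap F A t - u := by rw [hu, sub_sub_cancel]
  rw [hw', hu']
  exact C.sub_mem (C.algebraMap_mem t) (C.smul_mem hvC _)

end NormOne

theorem exists_isUnit_map_eq_neg {F K : Type*} [Field F] [CommRing K] [Algebra F K]
    (hK2 : Module.finrank F K = 2)
    (hKet : ∀ x : K, x ≠ 0 → ∃ y : K, Algebra.trace F K (x * y) ≠ 0)
    (conj : K →ₐ[F] K) (hconj : ∀ x, conj (conj x) = x)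
    (hfix : ∀ x : K, conj x = x ↔ ∃ a : F, algebraMap F K a = x) :
    ∃ δ : K, IsUnit δ ∧ conj δ = -δ := by
  obtain ⟨k, hk⟩ : ∃ k : K, conj k ≠ k := by
    by_contra! h
    have : Module.finrank F K ≤ 1 := finrank_le_one (1 : K) fun w ↦ by
      obtain ⟨a, ha⟩ := (hfix w).mp (h w)
      exact ⟨a, by rw [← ha, Algebra.algebraMap_eq_smul_one]⟩
    omega
  set δ := k - conj k
  have hδc : conj δ = -δ := by rw [map_sub, hconj, neg_sub]
  obtain ⟨d, hd⟩ := (hfix (δ * δ)).mp (by rw [map_mul, hδc, neg_mul_neg])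
  have hd0 : d ≠ 0 := by
    rintro rfl
    have : Module.Finite F K := Module.finite_of_finrank_eq_succ hK2
    obtain ⟨y, hy⟩ := hKet δ (sub_ne_zero_of_ne hk.symm)
    refine hy (Algebra.isNilpotent_trace_of_isNilpotent ⟨2, ?_⟩).eq_zero
    rw [mul_pow, sq, ← hd, map_zero, zero_mul]
  refine ⟨δ, IsUnit.of_mul_eq_one (d⁻¹ • δ) ?_, hδc⟩
  rw [mul_smul_comm, ← hd, Algebra.smul_def, ← map_mul, inv_mul_cancel₀ hd0, map_one]

section TensorProduct

variable {F K E : Type} [Field F] [CommRing K] [Algebra F K] [CommRing E] [Algebra F E]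

theorem tensorConj_tmul (conj : K →ₐ[F] K) (k : K) (e : E) :
    tensorConj conj (k ⊗ₜ[F] e) = conj k ⊗ₜ e := rfl

theorem span_tensorConj_eq_neg_eq_top (conj : K →ₐ[F] K) {δ : K} (hδ : IsUnit δ)
    (hδc : conj δ = -δ) :
    Submodule.span K {w : K ⊗[F] E | tensorConj conj w = -w} = ⊤ := by
  rw [eq_top_iff]
  rintro v -
  induction v using TensorProduct.induction_on with
  | zero => exact zero_mem _
  | tmul k e =>
    have hskew : tensorConj conj (δ ⊗ₜ[F] e) = -(δ ⊗ₜ e) := by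
      rw [tensorConj_tmul, hδc, TensorProduct.neg_tmul]
    have : k ⊗ₜ[F] e = (k * ↑hδ.unit⁻¹) • (δ ⊗ₜ e) := by
      rw [TensorProduct.smul_tmul', smul_eq_mul, mul_assoc, IsUnit.val_inv_mul, mul_one]
    rw [this]
    exact Submodule.smul_mem _ _ (Submodule.subset_span hskew)
  | add _ _ hx hy => exact add_mem hx hy

theorem hermFormOf_mul_mul (conj : K →ₐ[F] K) (μ c x y : K ⊗[F] E) :
    hermFormOf conj μ (c * x) (c * y) = hermFormOf conj (c * tensorConj conj c * μ) x y := by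
  simp only [hermFormOf, map_mul]
  ring_nf

variable [Module.Finite F E]

theorem Algebra.trace_one_tmul (x : E) :
    Algebra.trace K (K ⊗[F] E) (1 ⊗ₜ x) = algebraMap F K (Algebra.trace F E x) := by
  have : Algebra.lmul K (K ⊗[F] E) (1 ⊗ₜ x) = (Algebra.lmul F E x).baseChange K := by
    ext
    simp [Algebra.TensorProduct.tmul_mul_tmul]
  rw [Algebra.trace_apply, this, LinearMap.trace_baseChange, Algebra.trace_apply]

theorem eq_zero_of_forall_trace_mul_eq_zero (hE : (Algebra.traceForm F E).Nondegenerate)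
    {c : K ⊗[F] E} (hc : ∀ a, Algebra.trace K (K ⊗[F] E) (c * a) = 0) : c = 0 := by
  classical
  let b := Module.finBasis F E
  let bK := Algebra.TensorProduct.basis K b
  -- pairing with the trace-dual basis of `b` extracts the coordinates of `c` in `1 ⊗ b`
  have hcoord : ∀ j, bK.repr c j =
      Algebra.trace K (K ⊗[F] E) (c * (1 ⊗ₜ (Algebra.traceForm F E).dualBasis hE b j)) := by
    intro j
    conv_rhs => rw [← bK.sum_repr c]
    simp only [bK, Algebra.TensorProduct.basis_apply, Finset.sum_mul, smul_mul_assoc,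
      Algebra.TensorProduct.tmul_mul_tmul, mul_one, map_sum, map_smul, Algebra.trace_one_tmul]
    rw [Finset.sum_eq_single j]
    · rw [mul_comm, ← Algebra.traceForm_apply, LinearMap.BilinForm.apply_dualBasis_left,
        if_pos rfl, map_one, smul_eq_mul, mul_one]
    · intro i _ hij
      rw [mul_comm, ← Algebra.traceForm_apply, LinearMap.BilinForm.apply_dualBasis_left,
        if_neg hij, map_zero, smul_zero]
    · simp
  exact bK.forall_coord_eq_zero_iff.mp fun j ↦ (hcoord j).trans (hc _)

theorem eq_of_forall_hermFormOf_eq (hE : (Algebra.traceForm F E).Nondegenerate)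
    (conj : K →ₐ[F] K) {μ μ' : K ⊗[F] E}
    (h : ∀ x y, hermFormOf conj μ x y = hermFormOf conj μ' x y) : μ = μ' := by
  refine sub_eq_zero.mp (eq_zero_of_forall_trace_mul_eq_zero hE fun a ↦ ?_)
  have := h a 1
  simp only [hermFormOf, map_one, mul_one] at this
  rw [sub_mul, map_sub, this, sub_self]

end TensorProduct

theorem commute_lmul_of_commute_normOneGroup {F K A : Type} [Field F] [Infinite F] [CommRing K]
    [Algebra F K] [CommRing A] [Algebra F A] [Algebra K A] [IsScalarTower F K A]
    [Module.Finite F A] (σ : A →ₐ[F] A) (h2 : (2 : F) ≠ 0)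
    (hspan : Submodule.span K {w : A | σ w = -w} = ⊤) {T : Module.End K A}
    (hT : ∀ x ∈ normOneGroup σ, Commute T (Algebra.lmul K A x)) (a : A) :
    Commute T (Algebra.lmul K A a) := by
  let C := (Subalgebra.centralizer K {T}).comap (Algebra.lmul K A)
  have hC : ∀ b, b ∈ C ↔ Commute T (Algebra.lmul K A b) := fun b ↦ by
    simp [C, Subalgebra.mem_centralizer_iff, Commute, SemiconjBy, eq_comm]
  have hadj : Algebra.adjoin F (((↑) : Aˣ → A) '' normOneGroup σ) ≤ C.restrictScalars F :=
    Algebra.adjoin_le <| by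
      rintro _ ⟨x, hx, rfl⟩
      exact (hC x).mpr (hT x hx)
  have hskew : Submodule.span K {w : A | σ w = -w} ≤ Subalgebra.toSubmodule C :=
    Submodule.span_le.mpr fun w hw ↦ hadj (mem_adjoin_normOneGroup_of_map_eq_neg σ h2 hw)
  exact (hC a).mp (hskew (hspan ▸ Submodule.mem_top))

theorem LinearEquiv.exists_unit_apply_eq_mul {R A : Type*} [CommSemiring R] [CommSemiring A]
    [Algebra R A] (T : A ≃ₗ[R] A) (hT : ∀ a v, T (a * v) = a * T v) :
    ∃ y : Aˣ, ∀ v, T v = y * v := by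
  have h : ∀ v, T v = T 1 * v := fun v ↦ by rw [mul_comm, ← hT, mul_one]
  obtain ⟨v₀, hv₀⟩ := T.surjective 1
  exact ⟨(IsUnit.of_mul_eq_one v₀ ((h v₀).symm.trans hv₀)).unit, h⟩

theorem stmt14_general (F K E V : Type) [Field F] [Infinite F] [CommRing K] [Algebra F K]
    [CommRing E] [Algebra F E] [AddCommGroup V] [Module K V]
    (hchar : (2 : F) ≠ 0)
    (hK2 : Module.finrank F K = 2)
    (hKet : ∀ x : K, x ≠ 0 → ∃ y : K, Algebra.trace F K (x * y) ≠ 0)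
    (conj : K →ₐ[F] K)
    (hconj : ∀ x, conj (conj x) = x)
    (hfix : ∀ x : K, conj x = x ↔ ∃ a : F, algebraMap F K a = x)
    [Module.Finite F E]
    (hEet : ∀ x : E, x ≠ 0 → ∃ y : E, Algebra.trace F E (x * y) ≠ 0)
    (B : V → V → K)
    (lam lam' : Eˣ)
    (r₁ r₂ : (K ⊗[F] E) ≃ₗ[K] V)
    (hr₁ : ∀ x y : K ⊗[F] E,
      B (r₁ x) (r₁ y) = hermFormOf conj (Algebra.TensorProduct.includeRight (lam : E)) x y)
    (hr₂ : ∀ x y : K ⊗[F] E,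
      B (r₂ x) (r₂ y) = hermFormOf conj (Algebra.TensorProduct.includeRight (lam' : E)) x y) :
    (∀ x : (K ⊗[F] E)ˣ, x ∈ normOneGroup (tensorConj conj) →
        r₁.toLinearMap ∘ₗ (Algebra.lmul K (K ⊗[F] E) (x : K ⊗[F] E)) ∘ₗ r₁.symm.toLinearMap
          = r₂.toLinearMap ∘ₗ (Algebra.lmul K (K ⊗[F] E) (x : K ⊗[F] E))
              ∘ₗ r₂.symm.toLinearMap)
      ↔ ∃ y : (K ⊗[F] E)ˣ,
          (Algebra.TensorProduct.includeRight (lam : E)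
            = ((y : K ⊗[F] E) * tensorConj conj (y : K ⊗[F] E))
                * Algebra.TensorProduct.includeRight (lam' : E)) ∧
          ∀ v : K ⊗[F] E, r₁ v = r₂ ((y : K ⊗[F] E) * v) := by
  constructor
  · intro hcomm
    have : Module.Finite F K := Module.finite_of_finrank_eq_succ hK2
    obtain ⟨δ, hδ, hδc⟩ := exists_isUnit_map_eq_neg hK2 hKet conj hconj hfix
    let T := r₁.trans r₂.symm
    have hT : ∀ x : (K ⊗[F] E)ˣ, x ∈ normOneGroup (tensorConj conj) →
        Commute (T : Module.End K (K ⊗[F] E)) (Algebra.lmul K (K ⊗[F] E) x) := fun x hx ↦ by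
      refine LinearMap.ext fun v ↦ ?_
      have := LinearMap.congr_fun (hcomm x hx) (r₁ v)
      simp only [Algebra.coe_lmul_eq_mul, LinearMap.coe_comp, LinearEquiv.coe_coe,
        Function.comp_apply, LinearEquiv.symm_apply_apply, LinearMap.mul_apply_apply] at this
      simp [T, this]
    obtain ⟨y, hy⟩ := T.exists_unit_apply_eq_mul fun a v ↦ LinearMap.congr_fun
      (commute_lmul_of_commute_normOneGroup _ hchar
        (span_tensorConj_eq_neg_eq_top conj hδ hδc) hT a) v
    have hr : ∀ v, r₁ v = r₂ (y * v) := fun v ↦ by rw [← hy]; simp [T]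
    have hE : (Algebra.traceForm F E).Nondegenerate := .ofSeparatingLeft fun x hx ↦ by
      by_contra h
      obtain ⟨z, hz⟩ := hEet x h
      exact hz (hx z)
    refine ⟨y, eq_of_forall_hermFormOf_eq hE conj fun a b ↦ ?_, hr⟩
    rw [← hr₁, hr, hr, hr₂, hermFormOf_mul_mul]
  · rintro ⟨y, -, hy⟩ x -
    refine LinearMap.ext fun v ↦ ?_
    have hsymm : r₂.symm v = y * r₁.symm v := by
      rw [r₂.symm_apply_eq, ← hy, r₁.apply_symm_apply]
    simp [hsymm, hy, mul_left_comm]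

/-- Uniqueness of conjugating data: for isometries
`r₁ : V_{E,λ} → V` and `r₂ : V_{E,λ'} → V`, the equality
`r₁ ∘ M_x ∘ r₁⁻¹ = r₂ ∘ M_x ∘ r₂⁻¹` holds for all `x ∈ K_E¹` if and only if
there exists `y ∈ K_E×` with `λ = N_{K_E/E}(y)·λ'` and `r₁ = r₂ ∘ M_y`. -/
theorem stmt14 (F K E V : Type) [Field F] [Infinite F] [CommRing K] [Algebra F K]
    [CommRing E] [Algebra F E] [AddCommGroup V] [Module K V] (n : ℕ)
    (hchar : (2 : F) ≠ 0)
    (hK2 : Module.finrank F K = 2)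
    (hKet : ∀ x : K, x ≠ 0 → ∃ y : K, Algebra.trace F K (x * y) ≠ 0)
    (conj : K →ₐ[F] K)
    (hconj : ∀ x, conj (conj x) = x)
    (hfix : ∀ x : K, conj x = x ↔ ∃ a : F, algebraMap F K a = x)
    [Module.Finite F E] (hEn : Module.finrank F E = n)
    (hEet : ∀ x : E, x ≠ 0 → ∃ y : E, Algebra.trace F E (x * y) ≠ 0)
    (B : V → V → K)
    (hherm : ∀ x y, B x y = conj (B y x))
    (haddl : ∀ x x' y, B (x + x') y = B x y + B x' y)
    (hsmull : ∀ (a : K) (x y : V), B (a • x) y = a * B x y)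
    (hnd : ∀ x : V, x ≠ 0 → ∃ y, B x y ≠ 0)
    (lam lam' : Eˣ)
    (r₁ r₂ : (K ⊗[F] E) ≃ₗ[K] V)
    (hr₁ : ∀ x y : K ⊗[F] E,
      B (r₁ x) (r₁ y) = hermFormOf conj (Algebra.TensorProduct.includeRight (lam : E)) x y)
    (hr₂ : ∀ x y : K ⊗[F] E,
      B (r₂ x) (r₂ y) = hermFormOf conj (Algebra.TensorProduct.includeRight (lam' : E)) x y) :
    (∀ x : (K ⊗[F] E)ˣ, x ∈ normOneGroup (tensorConj conj) →
        r₁.toLinearMap ∘ₗ (Algebra.lmul K (K ⊗[F] E) (x : K ⊗[F] E)) ∘ₗ r₁.symm.toLinearMap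
          = r₂.toLinearMap ∘ₗ (Algebra.lmul K (K ⊗[F] E) (x : K ⊗[F] E))
              ∘ₗ r₂.symm.toLinearMap)
      ↔ ∃ y : (K ⊗[F] E)ˣ,
          (Algebra.TensorProduct.includeRight (lam : E)
            = ((y : K ⊗[F] E) * tensorConj conj (y : K ⊗[F] E))
                * Algebra.TensorProduct.includeRight (lam' : E)) ∧
          ∀ v : K ⊗[F] E, r₁ v = r₂ ((y : K ⊗[F] E) * v) :=
  stmt14_general F K E V hchar hK2 hKet conj hconj hfix hEet B lam lam' r₁ r₂ hr₁ hr₂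
end
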